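/- arXiv:1908.05995 — 2 statements merged into one kernel-verified Lean document; each statement's English description precedes it below -/
import Mathlib

section
/- Let v, w : [0,T] → [v_min, v_max] be continuous with v_min > 0, and fix t ∈ [0,T], x ∈ [0,1]. Suppose t₀ᵛ, t₀ʷ ∈ [0,t] satisfy x = ∫_{t₀ᵛ}^{t} v(s) ds and x = ∫_{t₀ʷ}^{t} w(s) ds. Then |t₀ᵛ − t₀ʷ| ≤ (T/v_min)·sup_{s∈[0,T]}|v(s) − w(s)|. -/
lemma aux_stmt10 (T vmin M : ℝ) (hvmin : 0 < vmin)
    (v w : ℝ → ℝ)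
    (hv : ContinuousOn v (Set.Icc 0 T)) (hw : ContinuousOn w (Set.Icc 0 T))
    (hvran : ∀ s ∈ Set.Icc 0 T, vmin ≤ v s)
    (hM : ∀ s ∈ Set.Icc 0 T, |v s - w s| ≤ M)
    (t t₀v t₀w : ℝ) (ht : t ∈ Set.Icc 0 T)
    (ht₀v : t₀v ∈ Set.Icc 0 t) (ht₀w : t₀w ∈ Set.Icc 0 t)
    (hle : t₀v ≤ t₀w)
    (heq : (∫ s in t₀v..t, v s) = ∫ s in t₀w..t, w s) :
    t₀w - t₀v ≤ (T / vmin) * M := by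
  obtain ⟨ht0, htT⟩ := ht
  obtain ⟨hv0, hvt⟩ := ht₀v
  obtain ⟨hw0, hwt⟩ := ht₀w
  have hsub1 : Set.uIcc t₀v t₀w ⊆ Set.Icc 0 T := by
    rw [Set.uIcc_of_le hle]
    exact fun s hs => ⟨le_trans hv0 hs.1, le_trans (le_trans hs.2 hwt) htT⟩
  have hsub2 : Set.uIcc t₀w t ⊆ Set.Icc 0 T := by
    rw [Set.uIcc_of_le hwt]
    exact fun s hs => ⟨le_trans hw0 hs.1, le_trans hs.2 htT⟩
  have hsub3 : Set.uIcc t₀v t ⊆ Set.Icc 0 T := by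
    rw [Set.uIcc_of_le hvt]
    exact fun s hs => ⟨le_trans hv0 hs.1, le_trans hs.2 htT⟩
  have hiv1 : IntervalIntegrable v MeasureTheory.volume t₀v t₀w :=
    (hv.mono hsub1).intervalIntegrable
  have hiv2 : IntervalIntegrable v MeasureTheory.volume t₀w t :=
    (hv.mono hsub2).intervalIntegrable
  have hiw2 : IntervalIntegrable w MeasureTheory.volume t₀w t :=
    (hw.mono hsub2).intervalIntegrable
  have hsplit : (∫ s in t₀v..t, v s) = (∫ s in t₀v..t₀w, v s) + ∫ s in t₀w..t, v s :=
    (intervalIntegral.integral_add_adjacent_intervals hiv1 hiv2).symm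
  have key : (∫ s in t₀v..t₀w, v s) = ∫ s in t₀w..t, (w s - v s) := by
    rw [intervalIntegral.integral_sub hiw2 hiv2, ← heq, hsplit]; ring
  have hlow : vmin * (t₀w - t₀v) ≤ ∫ s in t₀v..t₀w, v s := by
    have := intervalIntegral.integral_mono_on hle
      (intervalIntegrable_const (c := vmin)) hiv1
      (fun s hs => hvran s (hsub1 (by rwa [Set.uIcc_of_le hle])))
    simpa [mul_comm] using this
  have hup : (∫ s in t₀w..t, (w s - v s)) ≤ M * (t - t₀w) := by
    have := intervalIntegral.integral_mono_on hwt
      ((hw.mono hsub2).sub (hv.mono hsub2)).intervalIntegrable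
      (intervalIntegrable_const (μ := MeasureTheory.volume) (c := M))
      (fun s hs => by
        have hs' : s ∈ Set.Icc 0 T := hsub2 (by rwa [Set.uIcc_of_le hwt])
        have := hM s hs'
        rw [abs_sub_comm] at this
        exact le_trans (le_abs_self _) this)
    simpa [mul_comm] using this
  have hM0 : 0 ≤ M := le_trans (abs_nonneg _) (hM 0 ⟨le_refl 0, le_trans ht0 htT⟩)
  have hTb : M * (t - t₀w) ≤ M * T := by
    apply mul_le_mul_of_nonneg_left _ hM0
    have : 0 ≤ t₀w := hw0
    linarith
  have hfinal : vmin * (t₀w - t₀v) ≤ M * T := by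
    calc vmin * (t₀w - t₀v) ≤ ∫ s in t₀v..t₀w, v s := hlow
      _ = ∫ s in t₀w..t, (w s - v s) := key
      _ ≤ M * (t - t₀w) := hup
      _ ≤ M * T := hTb
  rw [div_mul_eq_mul_div, le_div_iff₀ hvmin]
  nlinarith

theorem stmt_10 (T vmin vmax M : ℝ) (hT : 0 < T) (hvmin : 0 < vmin)
    (v w : ℝ → ℝ)
    (hv : ContinuousOn v (Set.Icc 0 T)) (hw : ContinuousOn w (Set.Icc 0 T))
    (hvran : ∀ s ∈ Set.Icc 0 T, v s ∈ Set.Icc vmin vmax)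
    (hwran : ∀ s ∈ Set.Icc 0 T, w s ∈ Set.Icc vmin vmax)
    (hM : ∀ s ∈ Set.Icc 0 T, |v s - w s| ≤ M)
    (t x t₀v t₀w : ℝ) (ht : t ∈ Set.Icc 0 T) (hx : x ∈ Set.Icc (0:ℝ) 1)
    (ht₀v : t₀v ∈ Set.Icc 0 t) (ht₀w : t₀w ∈ Set.Icc 0 t)
    (hxv : x = ∫ s in t₀v..t, v s) (hxw : x = ∫ s in t₀w..t, w s) :
    |t₀v - t₀w| ≤ (T / vmin) * M := by
  rcases le_total t₀v t₀w with h | h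
  · rw [abs_sub_comm, abs_of_nonneg (by linarith)]
    exact aux_stmt10 T vmin M hvmin v w hv hw (fun s hs => (hvran s hs).1) hM
      t t₀v t₀w ht ht₀v ht₀w h (by rw [← hxv, ← hxw])
  · rw [abs_of_nonneg (by linarith)]
    exact aux_stmt10 T vmin M hvmin w v hw hv (fun s hs => (hwran s hs).1)
      (fun s hs => by rw [abs_sub_comm]; exact hM s hs)
      t t₀w t₀v ht ht₀w ht₀v h (by rw [← hxv, ← hxw])
end

section
/- Let ρ₀ : [0,1] → ℝ be Lipschitz with constant L₀, let b̃ : ℝ₊ → ℝ be Lipschitz with constant L_b, with ρ₀(0) = b̃(0). Let v : [0,T] → [v_min, v_max] be continuous with v_min > 0, and define ρ_v(t,x) = ρ₀(x − ∫₀ᵗ v(s)ds) if x > ∫₀ᵗ v(s)ds, and ρ_v(t,x) = b̃(t₀(t,x;v)) if x ≤ ∫₀ᵗ v(s)ds, where t₀(t,x;v) solves x = ∫_{t₀}^t v(s)ds. Then for each t ∈ [0,T], the function x ↦ ρ_v(t,x) is Lipschitz on [0,1] with constant max(L₀, L_b/v_min). -/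
open MeasureTheory Set

theorem stmt_12 (T vmin vmax L₀ Lb : ℝ) (hT : 0 < T) (hvmin : 0 < vmin)
    (ρ₀ bt v : ℝ → ℝ)
    (hρ₀ : ∀ x ∈ Set.Icc (0:ℝ) 1, ∀ y ∈ Set.Icc (0:ℝ) 1, |ρ₀ x - ρ₀ y| ≤ L₀ * |x - y|)
    (hbt : ∀ s t : ℝ, 0 ≤ s → 0 ≤ t → |bt s - bt t| ≤ Lb * |s - t|)
    (hcomp : ρ₀ 0 = bt 0)
    (hv : ContinuousOn v (Set.Icc 0 T))
    (hvran : ∀ s ∈ Set.Icc 0 T, v s ∈ Set.Icc vmin vmax)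
    (t₀ : ℝ → ℝ → ℝ)
    (ht₀ : ∀ t ∈ Set.Icc 0 T, ∀ x ∈ Set.Icc (0:ℝ) 1,
      x ≤ (∫ s in (0:ℝ)..t, v s) →
        t₀ t x ∈ Set.Icc 0 t ∧ x = ∫ s in (t₀ t x)..t, v s)
    (ρv : ℝ → ℝ → ℝ)
    (hρv : ∀ t x, ρv t x =
      if x ≤ (∫ s in (0:ℝ)..t, v s) then bt (t₀ t x)
      else ρ₀ (x - ∫ s in (0:ℝ)..t, v s)) :
    ∀ t ∈ Set.Icc 0 T, ∀ x ∈ Set.Icc (0:ℝ) 1, ∀ y ∈ Set.Icc (0:ℝ) 1,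
      |ρv t x - ρv t y| ≤ max L₀ (Lb / vmin) * |x - y| := by
  have hL0 : 0 ≤ L₀ := by
    have h := hρ₀ 0 (by norm_num) 1 (by norm_num)
    have h2 := abs_nonneg (ρ₀ 0 - ρ₀ 1)
    norm_num at h
    linarith
  have hLb : 0 ≤ Lb := by
    have h := hbt 0 1 le_rfl zero_le_one
    have h2 := abs_nonneg (bt 0 - bt 1)
    norm_num at h
    linarith
  set M := max L₀ (Lb / vmin) with hM
  have hML : L₀ ≤ M := le_max_left _ _
  have hMb : Lb / vmin ≤ M := le_max_right _ _
  have hM0 : 0 ≤ M := le_trans hL0 hML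
  have hvint : ∀ a b : ℝ, a ∈ Set.Icc 0 T → b ∈ Set.Icc 0 T →
      IntervalIntegrable v volume a b := by
    intro a b ha hb
    apply ContinuousOn.intervalIntegrable
    apply hv.mono
    intro s hs
    rcases le_total a b with hab | hab
    · rw [Set.uIcc_of_le hab] at hs
      exact ⟨le_trans ha.1 hs.1, le_trans hs.2 hb.2⟩
    · rw [Set.uIcc_of_ge hab] at hs
      exact ⟨le_trans hb.1 hs.1, le_trans hs.2 ha.2⟩
  have hlow : ∀ a b : ℝ, 0 ≤ a → a ≤ b → b ≤ T →
      vmin * (b - a) ≤ ∫ s in a..b, v s := by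
    intro a b ha hab hbT
    have h1 : (∫ _ in a..b, vmin) = (b - a) * vmin := by
      rw [intervalIntegral.integral_const]; simp [smul_eq_mul]
    have h2 : (∫ _ in a..b, vmin) ≤ ∫ s in a..b, v s := by
      apply intervalIntegral.integral_mono_on hab intervalIntegrable_const
        (hvint a b ⟨ha, le_trans hab hbT⟩ ⟨le_trans ha hab, hbT⟩)
      intro s hs
      exact (hvran s ⟨le_trans ha hs.1, le_trans hs.2 hbT⟩).1
    nlinarith
  intro t ht x hx y hy
  obtain ⟨ht0, htT⟩ := ht
  set I := ∫ s in (0:ℝ)..t, v s with hI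
  have hI0 : 0 ≤ I := by
    have := hlow 0 t le_rfl ht0 htT
    nlinarith
  -- split into pieces: ∫_{a}^{t} v with a ∈ [0,t]
  have hsplit : ∀ a : ℝ, a ∈ Set.Icc 0 t →
      I = (∫ s in (0:ℝ)..a, v s) + ∫ s in a..t, v s := by
    intro a ha
    rw [hI]
    exact (intervalIntegral.integral_add_adjacent_intervals
      (hvint 0 a ⟨le_rfl, hT.le⟩ ⟨ha.1, le_trans ha.2 htT⟩)
      (hvint a t ⟨ha.1, le_trans ha.2 htT⟩ ⟨ht0, htT⟩)).symm
  -- key one-sided lemma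
  have key : ∀ x ∈ Set.Icc (0:ℝ) 1, ∀ y ∈ Set.Icc (0:ℝ) 1, x ≤ y →
      |ρv t x - ρv t y| ≤ M * |x - y| := by
    intro x hx y hy hxy
    rw [hρv, hρv]
    by_cases hyI : y ≤ I
    · -- both boundary
      have hxI : x ≤ I := le_trans hxy hyI
      rw [if_pos hxI, if_pos hyI]
      obtain ⟨htx, hxeq⟩ := ht₀ t ⟨ht0, htT⟩ x hx hxI
      obtain ⟨hty, hyeq⟩ := ht₀ t ⟨ht0, htT⟩ y hy hyI
      -- x - y = ∫_{t₀ t x}^{t₀ t y} v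
      have hdiff : x - y = ∫ s in (t₀ t x)..(t₀ t y), v s := by
        have h1 := hsplit (t₀ t x) htx
        have h2 := hsplit (t₀ t y) hty
        have h3 : (∫ s in (0:ℝ)..(t₀ t x), v s) + ∫ s in (t₀ t x)..(t₀ t y), v s
            = ∫ s in (0:ℝ)..(t₀ t y), v s := by
          exact intervalIntegral.integral_add_adjacent_intervals
            (hvint 0 (t₀ t x) ⟨le_rfl, hT.le⟩ ⟨htx.1, le_trans htx.2 htT⟩)
            (hvint (t₀ t x) (t₀ t y) ⟨htx.1, le_trans htx.2 htT⟩ ⟨hty.1, le_trans hty.2 htT⟩)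
        linarith [hxeq, hyeq]
      have hbound : vmin * |t₀ t x - t₀ t y| ≤ |x - y| := by
        rcases le_total (t₀ t x) (t₀ t y) with hc | hc
        · have := hlow (t₀ t x) (t₀ t y) htx.1 hc (le_trans hty.2 htT)
          rw [← hdiff] at this
          rw [abs_of_nonpos (by linarith : t₀ t x - t₀ t y ≤ 0),
            abs_of_nonpos (by linarith : x - y ≤ 0)]
          nlinarith
        · have := hlow (t₀ t y) (t₀ t x) hty.1 hc (le_trans htx.2 htT)
          have hswap : (∫ s in (t₀ t y)..(t₀ t x), v s) = -(x - y) := by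
            rw [hdiff, intervalIntegral.integral_symm]
          rw [hswap] at this
          rw [abs_of_nonneg (by linarith : (0:ℝ) ≤ t₀ t x - t₀ t y),
            abs_of_nonpos (by linarith : x - y ≤ 0)]
          nlinarith
      have h := hbt (t₀ t x) (t₀ t y) htx.1 hty.1
      have hq : Lb / vmin * vmin = Lb := div_mul_cancel₀ Lb (ne_of_gt hvmin)
      have : Lb * |t₀ t x - t₀ t y| ≤ Lb / vmin * |x - y| := by
        have hd0 : 0 ≤ Lb / vmin := div_nonneg hLb hvmin.le
        nlinarith [abs_nonneg (t₀ t x - t₀ t y)]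
      calc |bt (t₀ t x) - bt (t₀ t y)| ≤ Lb * |t₀ t x - t₀ t y| := h
        _ ≤ Lb / vmin * |x - y| := this
        _ ≤ M * |x - y| := mul_le_mul_of_nonneg_right hMb (abs_nonneg _)
    · by_cases hxI : x ≤ I
      · -- mixed case : x ≤ I < y
        rw [if_pos hxI, if_neg hyI]
        push_neg at hyI
        obtain ⟨htx, hxeq⟩ := ht₀ t ⟨ht0, htT⟩ x hx hxI
        have hyI' : y - I ∈ Set.Icc (0:ℝ) 1 := ⟨by linarith, by linarith [hy.2]⟩
        have h1 : |bt (t₀ t x) - bt 0| ≤ Lb / vmin * (I - x) := by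
          have hIx : I - x = ∫ s in (0:ℝ)..(t₀ t x), v s := by
            have := hsplit (t₀ t x) htx
            rw [← hxeq] at this
            linarith
          have hlo := hlow 0 (t₀ t x) le_rfl htx.1 (le_trans htx.2 htT)
          rw [← hIx] at hlo
          have h := hbt (t₀ t x) 0 htx.1 le_rfl
          have hq : Lb / vmin * vmin = Lb := div_mul_cancel₀ Lb (ne_of_gt hvmin)
          have hd0 : 0 ≤ Lb / vmin := div_nonneg hLb hvmin.le
          simp only [sub_zero] at h hlo
          rw [abs_of_nonneg htx.1] at h
          nlinarith
        have h2 : |ρ₀ 0 - ρ₀ (y - I)| ≤ L₀ * (y - I) := by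
          have h := hρ₀ 0 (by norm_num) (y - I) hyI'
          rw [abs_of_nonpos (by linarith : (0:ℝ) - (y - I) ≤ 0)] at h
          linarith
        have htri : |bt (t₀ t x) - ρ₀ (y - I)| ≤
            |bt (t₀ t x) - bt 0| + |ρ₀ 0 - ρ₀ (y - I)| := by
          rw [← hcomp]
          calc |bt (t₀ t x) - ρ₀ (y - I)|
              = |(bt (t₀ t x) - ρ₀ 0) + (ρ₀ 0 - ρ₀ (y - I))| := by ring_nf
            _ ≤ |bt (t₀ t x) - ρ₀ 0| + |ρ₀ 0 - ρ₀ (y - I)| := abs_add_le _ _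
        have habs : |x - y| = y - x := by
          rw [abs_of_nonpos (by linarith)]; ring
        rw [habs]
        have hb1 : Lb / vmin * (I - x) ≤ M * (I - x) :=
          mul_le_mul_of_nonneg_right hMb (by linarith)
        have hb2 : L₀ * (y - I) ≤ M * (y - I) :=
          mul_le_mul_of_nonneg_right hML (by linarith)
        calc |bt (t₀ t x) - ρ₀ (y - I)|
            ≤ |bt (t₀ t x) - bt 0| + |ρ₀ 0 - ρ₀ (y - I)| := htri
          _ ≤ Lb / vmin * (I - x) + L₀ * (y - I) := add_le_add h1 h2
          _ ≤ M * (I - x) + M * (y - I) := add_le_add hb1 hb2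
          _ = M * (y - x) := by ring
      · -- both interior
        rw [if_neg hxI, if_neg hyI]
        push_neg at hxI hyI
        have hx' : x - I ∈ Set.Icc (0:ℝ) 1 := ⟨by linarith, by linarith [hx.2]⟩
        have hy' : y - I ∈ Set.Icc (0:ℝ) 1 := ⟨by linarith, by linarith [hy.2]⟩
        have h := hρ₀ (x - I) hx' (y - I) hy'
        have he : (x - I) - (y - I) = x - y := by ring
        rw [he] at h
        exact le_trans h (mul_le_mul_of_nonneg_right hML (abs_nonneg _))
  rcases le_total x y with h | h
  · exact key x hx y hy h
  · rw [abs_sub_comm (ρv t x) (ρv t y), abs_sub_comm x y]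
    exact key y hy x hx h
end
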